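/- arXiv:cond-mat/0502356 — 2 statements merged into one kernel-verified Lean document; each statement's English description precedes it below -/
import Mathlib

section
/- Among all hyperbolic 2-orbifold signatures (g; ν₁,…,νₙ) with g, n ≥ 0 and integers νⱼ ≥ 2, subject to χ_orb = 2 − 2g + Σⱼ(1/νⱼ) − n < 0, the maximum value of χ_orb (i.e. the negative value closest to zero) is −1/42, attained by the signature (0; 2, 3, 7). -/
/-!
If every `νⱼ = 2` then `χ = 2 - 2g - n/2` is a half-integer, so a negative `χ` is at most `-1/2`.
Otherwise `∑ 1/νⱼ ≤ n/2 - 1/6`, which gives `χ ≤ -1/6` as soon as `4g + n ≥ 4`. Since `χ < 0`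
forces `2g + n > 2`, only the triangle signatures `(0; a, b, c)` remain, where
`χ = 1/a + 1/b + 1/c - 1`, and a case analysis on the sorted triple shows that
`1/a + 1/b + 1/c < 1` forces the sum to be `< 41/42` unless `(a, b, c) = (2, 3, 7)`.
-/

/-- The orbifold Euler characteristic of a 2-orbifold of signature `(g; ν₁,…,νₙ)`. -/
noncomputable def chiOrb (g n : ℕ) (ν : Fin n → ℕ) : ℚ :=
  2 - 2 * g + ∑ j, 1 / (ν j : ℚ) - n

lemma one_div_natCast_le_one_div {k m : ℕ} (hk : 0 < k) (h : k ≤ m) :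
    1 / (m : ℚ) ≤ 1 / k :=
  one_div_le_one_div_of_le (by exact_mod_cast hk) (by exact_mod_cast h)

lemma lt_of_one_div_natCast_lt_one_div {k m : ℕ} (hk : 0 < k) (hm : 0 < m)
    (h : 1 / (m : ℚ) < 1 / k) : k < m := by
  exact_mod_cast (one_div_lt_one_div (by positivity) (by positivity)).1 h

lemma sum_one_div_le_half_card_sub_one_div_six {ι : Type*} [Fintype ι] {f : ι → ℕ}
    (hf : ∀ i, 2 ≤ f i) {i₀ : ι} (hi₀ : 3 ≤ f i₀) :
    ∑ i, 1 / (f i : ℚ) ≤ Fintype.card ι / 2 - 1 / 6 := by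
  have hexcess : 1 / 6 ≤ ∑ i, (1 / 2 - 1 / (f i : ℚ)) := by
    calc (1 / 6 : ℚ) ≤ 1 / 2 - 1 / (f i₀ : ℚ) := by
          linarith [one_div_natCast_le_one_div three_pos hi₀]
      _ ≤ ∑ i, (1 / 2 - 1 / (f i : ℚ)) :=
          Finset.single_le_sum (fun i _ => sub_nonneg.2 (by
            exact_mod_cast one_div_natCast_le_one_div two_pos (hf i))) (Finset.mem_univ i₀)
  rw [Finset.sum_sub_distrib] at hexcess
  simp only [Finset.sum_const, Finset.card_univ, nsmul_eq_mul] at hexcess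
  linarith

lemma chiOrb_le_neg_one_div_six {g n : ℕ} {ν : Fin n → ℕ} (hν : ∀ j, 2 ≤ ν j)
    (hneg : chiOrb g n ν < 0) (hsig : ¬(g = 0 ∧ n = 3)) : chiOrb g n ν ≤ -(1 / 6) := by
  have hS₀ : 0 ≤ ∑ j, 1 / (ν j : ℚ) := Finset.sum_nonneg fun j _ => by positivity
  have hgn : 2 < 2 * g + n := by
    have : (2 : ℚ) < 2 * g + n := by unfold chiOrb at hneg; linarith
    exact_mod_cast this
  unfold chiOrb at hneg ⊢
  by_cases hall : ∀ j, ν j = 2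
  · have hS₂ : ∑ j, 1 / (ν j : ℚ) = n / 2 := by simp [hall, div_eq_mul_inv]
    have h5 : 5 ≤ 4 * g + n := by
      have : (4 : ℚ) < 4 * g + n := by linarith
      exact_mod_cast this
    have : (5 : ℚ) ≤ 4 * g + n := by exact_mod_cast h5
    linarith
  · obtain ⟨j₀, hj₀⟩ := not_forall.1 hall
    have hS₃ : ∑ j, 1 / (ν j : ℚ) ≤ n / 2 - 1 / 6 := by
      simpa using sum_one_div_le_half_card_sub_one_div_six hν ((hν j₀).lt_of_ne' hj₀)
    have h4 : (4 : ℚ) ≤ 4 * g + n := by exact_mod_cast (show 4 ≤ 4 * g + n by omega)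
    linarith

lemma sum_one_div_lt_or_eq_two_three_seven {a b c : ℕ} (ha : 2 ≤ a) (hab : a ≤ b) (hbc : b ≤ c)
    (h : 1 / (a : ℚ) + 1 / b + 1 / c < 1) :
    1 / (a : ℚ) + 1 / b + 1 / c < 41 / 42 ∨ (a = 2 ∧ b = 3 ∧ c = 7) := by
  have hc₀ : 0 < c := by omega
  rcases (show a = 2 ∨ a = 3 ∨ 4 ≤ a by omega) with rfl | rfl | ha4
  · rcases (show b = 2 ∨ b = 3 ∨ b = 4 ∨ 5 ≤ b by omega) with rfl | rfl | rfl | hb5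
    · linarith [show (0 : ℚ) < 1 / c by positivity]
    · have hc : 6 < c := lt_of_one_div_natCast_lt_one_div (by norm_num) hc₀ (by linarith)
      rcases (show c = 7 ∨ 8 ≤ c by omega) with rfl | hc8
      · exact Or.inr ⟨rfl, rfl, rfl⟩
      · exact Or.inl (by linarith [one_div_natCast_le_one_div (by norm_num) hc8])
    · have hc : 4 < c := lt_of_one_div_natCast_lt_one_div (by norm_num) hc₀ (by linarith)
      exact Or.inl (by linarith [one_div_natCast_le_one_div (by norm_num) hc])
    · exact Or.inl (by linarith [one_div_natCast_le_one_div (by norm_num) hb5,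
        one_div_natCast_le_one_div (by norm_num) (hb5.trans hbc)])
  · rcases (show b = 3 ∨ 4 ≤ b by omega) with rfl | hb4
    · have hc : 3 < c := lt_of_one_div_natCast_lt_one_div (by norm_num) hc₀ (by linarith)
      exact Or.inl (by linarith [one_div_natCast_le_one_div (by norm_num) hc])
    · exact Or.inl (by linarith [one_div_natCast_le_one_div (by norm_num) hb4,
        one_div_natCast_le_one_div (by norm_num) (hb4.trans hbc)])
  · exact Or.inl (by linarith [one_div_natCast_le_one_div (by norm_num) ha4,
      one_div_natCast_le_one_div (by norm_num) (ha4.trans hab),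
      one_div_natCast_le_one_div (by norm_num) ((ha4.trans hab).trans hbc)])

lemma sum_one_div_fin_three_le_of_lt_one (ν : Fin 3 → ℕ) (hν : ∀ j, 2 ≤ ν j)
    (h : ∑ j, 1 / (ν j : ℚ) < 1) :
    ∑ j, 1 / (ν j : ℚ) ≤ 41 / 42 ∧
      (∑ j, 1 / (ν j : ℚ) = 41 / 42 → (List.ofFn ν : Multiset ℕ) = {2, 3, 7}) := by
  set μ := ν ∘ Tuple.sort ν
  have hμ : Monotone μ := Tuple.monotone_sort ν
  have hμ0 : 2 ≤ μ 0 := hν _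
  have hsum : ∑ j, 1 / (ν j : ℚ) = 1 / (μ 0 : ℚ) + 1 / μ 1 + 1 / μ 2 := by
    rw [← Fin.sum_univ_three (fun j => 1 / (μ j : ℚ))]
    exact (Equiv.sum_comp (Tuple.sort ν) (fun j => 1 / (ν j : ℚ))).symm
  have hlist : (List.ofFn ν : Multiset ℕ) = List.ofFn μ :=
    Multiset.coe_eq_coe.2 ((Tuple.sort ν).ofFn_comp_perm ν).symm
  rw [hsum] at h ⊢
  rw [hlist]
  clear_value μ
  rcases sum_one_div_lt_or_eq_two_three_seven hμ0 (hμ (by decide)) (hμ (by decide)) h with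
    hlt | ⟨h0, h1, h2⟩
  · exact ⟨hlt.le, fun heq => absurd heq hlt.ne⟩
  · refine ⟨by rw [h0, h1, h2]; norm_num, fun _ => ?_⟩
    rw [show List.ofFn μ = [μ 0, μ 1, μ 2] from rfl, h0, h1, h2]
    rfl

lemma chiOrb_zero_three (ν : Fin 3 → ℕ) : chiOrb 0 3 ν = ∑ j, 1 / (ν j : ℚ) - 1 := by
  unfold chiOrb
  push_cast
  ring

/-- Among hyperbolic signatures (`χ_orb < 0`) the maximum of `χ_orb` is `-1/42`,
attained precisely by the signature `(0; 2, 3, 7)`. -/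
theorem hurwitz_orbifold_minimum :
    (∀ (g n : ℕ) (ν : Fin n → ℕ), (∀ j, 2 ≤ ν j) → chiOrb g n ν < 0 →
      chiOrb g n ν ≤ -(1 / 42)) ∧
    chiOrb 0 3 ![2, 3, 7] = -(1 / 42) ∧
    (∀ (g n : ℕ) (ν : Fin n → ℕ), (∀ j, 2 ≤ ν j) → chiOrb g n ν = -(1 / 42) →
      g = 0 ∧ n = 3 ∧ (List.ofFn ν : Multiset ℕ) = {2, 3, 7}) := by
  refine ⟨fun g n ν hν hneg => ?_, ?_, fun g n ν hν heq => ?_⟩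
  · by_cases hsig : g = 0 ∧ n = 3
    · obtain ⟨rfl, rfl⟩ := hsig
      rw [chiOrb_zero_three] at hneg ⊢
      linarith [(sum_one_div_fin_three_le_of_lt_one ν hν (by linarith)).1]
    · linarith [chiOrb_le_neg_one_div_six hν hneg hsig]
  · rw [chiOrb_zero_three, Fin.sum_univ_three]
    simp only [Fin.isValue, Matrix.cons_val_zero, Matrix.cons_val_one, Matrix.cons_val]
    norm_num
  · have hneg : chiOrb g n ν < 0 := by rw [heq]; norm_num
    by_cases hsig : g = 0 ∧ n = 3
    · obtain ⟨rfl, rfl⟩ := hsig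
      rw [chiOrb_zero_three] at hneg heq
      exact ⟨rfl, rfl, (sum_one_div_fin_three_le_of_lt_one ν hν (by linarith)).2 (by linarith)⟩
    · linarith [chiOrb_le_neg_one_div_six hν hneg hsig]
end

section
/- (Hurwitz bound as a corollary of the orbifold minimum) If a finite group G acts effectively by orientation-preserving isometries on a closed hyperbolic surface of genus g' ≥ 2 with quotient orbifold of signature (g; ν₁,…,νₙ), then #G = (2g'−2)/(−χ_orb) ≤ 84(g'−1), using that −χ_orb ≥ 1/42 for hyperbolic signatures. -/
theorem one_div_add_one_div_add_one_div_le_of_le {a b c : ℕ} (ha : 2 ≤ a) (hab : a ≤ b)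
    (hbc : b ≤ c) (h : (1 : ℚ) / a + 1 / b + 1 / c < 1) :
    (1 : ℚ) / a + 1 / b + 1 / c ≤ 41 / 42 := by
  have hc : (0 : ℚ) < c := by norm_cast; omega
  rcases le_or_gt 4 a with ha4 | ha3
  · calc _ ≤ (1 : ℚ) / 4 + 1 / 4 + 1 / 4 := by gcongr <;> norm_cast <;> omega
      _ ≤ 41 / 42 := by norm_num
  interval_cases a
  · rcases le_or_gt 5 b with hb5 | hb4
    · calc _ ≤ (1 : ℚ) / 2 + 1 / 5 + 1 / 5 := by gcongr <;> norm_cast <;> omega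
        _ ≤ 41 / 42 := by norm_num
    interval_cases b
    · norm_num at h
      linarith [one_div_pos.2 hc]
    · have : 6 < c := by exact_mod_cast lt_of_one_div_lt_one_div (b := 6) hc (by linarith)
      calc _ ≤ (1 : ℚ) / 2 + 1 / 3 + 1 / 7 := by gcongr <;> norm_cast
        _ = 41 / 42 := by norm_num
    · have : 4 < c := by exact_mod_cast lt_of_one_div_lt_one_div (b := 4) hc (by linarith)
      calc _ ≤ (1 : ℚ) / 2 + 1 / 4 + 1 / 5 := by gcongr <;> norm_cast
        _ ≤ 41 / 42 := by norm_num
  · rcases le_or_gt 4 b with hb4 | hb3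
    · calc _ ≤ (1 : ℚ) / 3 + 1 / 4 + 1 / 4 := by gcongr <;> norm_cast <;> omega
        _ ≤ 41 / 42 := by norm_num
    interval_cases b
    have : 3 < c := by exact_mod_cast lt_of_one_div_lt_one_div (b := 3) hc (by linarith)
    calc _ ≤ (1 : ℚ) / 3 + 1 / 3 + 1 / 4 := by gcongr <;> norm_cast
      _ ≤ 41 / 42 := by norm_num

theorem one_div_add_one_div_add_one_div_le {a b c : ℕ} (ha : 2 ≤ a) (hb : 2 ≤ b) (hc : 2 ≤ c)
    (h : (1 : ℚ) / a + 1 / b + 1 / c < 1) : (1 : ℚ) / a + 1 / b + 1 / c ≤ 41 / 42 := by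
  wlog hab : a ≤ b generalizing a b c
  · have := this hb ha hc (by linarith) (by omega)
    linarith
  wlog hbc : b ≤ c generalizing a b c
  · rcases le_total a c with hac | hca
    · have := this ha hc hb (by linarith) hac (by omega)
      linarith
    · have := this hc ha hb (by linarith) hca hab
      linarith
  exact one_div_add_one_div_add_one_div_le_of_le ha hab hbc h

section SumReciprocals

variable {n : ℕ} {ν : Fin n → ℕ}

theorem sum_one_div_le_card_div_two (hν : ∀ j, 2 ≤ ν j) : ∑ j, (1 : ℚ) / ν j ≤ n / 2 := by
  calc ∑ j, (1 : ℚ) / ν j ≤ ∑ _j : Fin n, 1 / 2 :=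
        Finset.sum_le_sum fun j _ => by gcongr; exact_mod_cast hν j
    _ = n / 2 := by simp [div_eq_mul_inv]

theorem sum_one_div_le_card_div_two_sub_one_div_six (hν : ∀ j, 2 ≤ ν j) {i : Fin n}
    (hi : 3 ≤ ν i) :
    ∑ j, (1 : ℚ) / ν j ≤ n / 2 - 1 / 6 := by
  calc ∑ j, (1 : ℚ) / ν j ≤ ∑ j, (1 / 2 - if i = j then 1 / 6 else 0) := by
        refine Finset.sum_le_sum fun j _ => ?_
        split_ifs with hij
        · subst hij
          calc (1 : ℚ) / ν i ≤ 1 / 3 := by gcongr; exact_mod_cast hi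
            _ = 1 / 2 - 1 / 6 := by norm_num
        · calc (1 : ℚ) / ν j ≤ 1 / 2 := by gcongr; exact_mod_cast hν j
            _ = 1 / 2 - 0 := (sub_zero _).symm
    _ = n / 2 - 1 / 6 := by
        rw [Finset.sum_sub_distrib, Finset.sum_ite_eq]
        simp [div_eq_mul_inv]

end SumReciprocals

theorem one_div_forty_two_le_neg_chiOrb_zero_three {ν : Fin 3 → ℕ} (hν : ∀ j, 2 ≤ ν j)
    (hχ : chiOrb 0 3 ν < 0) : 1 / 42 ≤ -chiOrb 0 3 ν := by
  simp only [chiOrb, Fin.sum_univ_three] at hχ ⊢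
  have := one_div_add_one_div_add_one_div_le (hν 0) (hν 1) (hν 2) (by push_cast at hχ; linarith)
  push_cast
  linarith

theorem one_div_six_le_neg_chiOrb_zero_four {ν : Fin 4 → ℕ} (hν : ∀ j, 2 ≤ ν j)
    (hχ : chiOrb 0 4 ν < 0) : 1 / 6 ≤ -chiOrb 0 4 ν := by
  unfold chiOrb at hχ ⊢
  by_cases h : ∃ i, 3 ≤ ν i
  · obtain ⟨i, hi⟩ := h
    have := sum_one_div_le_card_div_two_sub_one_div_six hν hi
    push_cast at this ⊢
    linarith
  · push Not at h
    have hν2 : ∀ j, ν j = 2 := fun j => by have := h j; have := hν j; omega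
    norm_num [hν2] at hχ

theorem one_div_forty_two_le_neg_chiOrb {g n : ℕ} {ν : Fin n → ℕ} (hν : ∀ j, 2 ≤ ν j)
    (hχ : chiOrb g n ν < 0) : 1 / 42 ≤ -chiOrb g n ν := by
  have hsum := sum_one_div_le_card_div_two hν
  have hsum₀ : 0 ≤ ∑ j, (1 : ℚ) / ν j := Finset.sum_nonneg fun j _ => by positivity
  rcases g with _ | _ | g
  · rcases (by omega : n ≤ 2 ∨ n = 3 ∨ n = 4 ∨ 5 ≤ n) with hn | rfl | rfl | hn
    · have : (n : ℚ) ≤ 2 := by exact_mod_cast hn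
      unfold chiOrb at hχ
      push_cast at hχ
      linarith
    · exact one_div_forty_two_le_neg_chiOrb_zero_three hν hχ
    · linarith [one_div_six_le_neg_chiOrb_zero_four hν hχ]
    · have : (5 : ℚ) ≤ n := by exact_mod_cast hn
      unfold chiOrb
      push_cast
      linarith
  · unfold chiOrb at hχ ⊢
    rcases n.eq_zero_or_pos with rfl | hn
    · simp at hχ
    · have : (1 : ℚ) ≤ n := by exact_mod_cast hn
      push_cast
      linarith
  · have : (0 : ℚ) ≤ g := g.cast_nonneg
    unfold chiOrb
    push_cast
    linarith

theorem hurwitz_eighty_four_bound_general (G g g' n : ℕ) (ν : Fin n → ℕ)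
    (hν : ∀ j, 2 ≤ ν j)
    (hχ : chiOrb g n ν < 0)
    (hmult : (2 * g' - 2 : ℚ) = (G : ℚ) * (-(chiOrb g n ν))) :
    (G : ℚ) = (2 * g' - 2) / (-(chiOrb g n ν)) ∧ G ≤ 84 * (g' - 1) := by
  have hpos : 0 < -chiOrb g n ν := neg_pos.2 hχ
  refine ⟨(eq_div_iff hpos.ne').2 hmult.symm, ?_⟩
  have hmin := one_div_forty_two_le_neg_chiOrb hν hχ
  have hg' : 1 ≤ g' := by
    have : (0 : ℚ) ≤ 2 * g' - 2 := by rw [hmult]; positivity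
    exact_mod_cast (by linarith : (1 : ℚ) ≤ g')
  have hG : (G : ℚ) ≤ (84 * (g' - 1) : ℕ) := by
    push_cast [Nat.cast_sub hg']
    calc (G : ℚ) = G * 1 := (mul_one _).symm
      _ ≤ G * (42 * -chiOrb g n ν) := by gcongr; linarith
      _ = 84 * (g' - 1) := by linarith
  exact_mod_cast hG

/-- Hurwitz bound: if a finite group of order `G` acts on a closed hyperbolic
surface of genus `g' ≥ 2` with quotient orbifold of signature `(g;ν₁,…,νₙ)`,
then `#G = (2g'-2)/(-χ_orb) ≤ 84(g'-1)`. -/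
theorem hurwitz_eighty_four_bound (G g g' n : ℕ) (ν : Fin n → ℕ)
    (hν : ∀ j, 2 ≤ ν j) (hg' : 2 ≤ g') (hG : 0 < G)
    (hχ : chiOrb g n ν < 0)
    (hmult : (2 * g' - 2 : ℚ) = (G : ℚ) * (-(chiOrb g n ν))) :
    (G : ℚ) = (2 * g' - 2) / (-(chiOrb g n ν)) ∧ G ≤ 84 * (g' - 1) :=
  hurwitz_eighty_four_bound_general G g g' n ν hν hχ hmult
end
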